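/- arXiv:2208.04900 — 2 statements merged into one kernel-verified Lean document; each statement's English description precedes it below -/
import Mathlib

section
/- Define, for κ ∈ [-1, 1] and Δ = (0, Δ¹) with Δ¹ ∈ ℝ, the function g(κ) = (1-|κ|)² √(κ² + (2|κ|+1)²/3) · |Δ¹|. Then g attains its maximum over [-1, 1] uniquely at κ = 0 (when Δ¹ ≠ 0), with g(0) = |Δ¹|/√3. -/
lemma key_strict (u : ℝ) (hu : 0 < u) (hu1 : u ≤ 1) :
    (1 - u) ^ 2 * Real.sqrt (u ^ 2 + (2 * u + 1) ^ 2 / 3) < Real.sqrt (1 / 3) := by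
  have hE : (0:ℝ) ≤ u ^ 2 + (2 * u + 1) ^ 2 / 3 := by positivity
  have hsq : (1 - u) ^ 2 = Real.sqrt (((1 - u) ^ 2) ^ 2) := by
    rw [Real.sqrt_sq (by positivity)]
  rw [hsq, ← Real.sqrt_mul (by positivity)]
  apply Real.sqrt_lt_sqrt (by positivity)
  nlinarith [sq_nonneg (1 - u), sq_nonneg u, sq_nonneg (u * (1-u)), sq_nonneg (u^2*(1-u)),
    sq_nonneg (u*u - u), mul_pos hu hu, sq_nonneg ((1-u)^2), pow_pos hu 3,
    mul_nonneg (mul_nonneg hu.le hu.le) (sq_nonneg (1-u)),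
    mul_nonneg (pow_pos hu 3).le (sq_nonneg (1-u))]

/-- The signal function `g(κ) = (1-|κ|)² √(κ² + (2|κ|+1)²/3)·|Δ¹|` attains its maximum
over `[-1,1]` uniquely at `κ = 0` (when `Δ¹ ≠ 0`), with `g(0) = |Δ¹|/√3`. -/
theorem signal_max_at_zero (Δ1 : ℝ) (hΔ : Δ1 ≠ 0) :
    (∀ κ : ℝ, -1 ≤ κ → κ ≤ 1 →
      (1 - |κ|) ^ 2 * Real.sqrt (κ ^ 2 + (2 * |κ| + 1) ^ 2 / 3) * |Δ1|
        ≤ (1 - |(0:ℝ)|) ^ 2 * Real.sqrt ((0:ℝ) ^ 2 + (2 * |(0:ℝ)| + 1) ^ 2 / 3) * |Δ1|) ∧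
    (∀ κ : ℝ, -1 ≤ κ → κ ≤ 1 → κ ≠ 0 →
      (1 - |κ|) ^ 2 * Real.sqrt (κ ^ 2 + (2 * |κ| + 1) ^ 2 / 3) * |Δ1|
        < (1 - |(0:ℝ)|) ^ 2 * Real.sqrt ((0:ℝ) ^ 2 + (2 * |(0:ℝ)| + 1) ^ 2 / 3) * |Δ1|) ∧
    (1 - |(0:ℝ)|) ^ 2 * Real.sqrt ((0:ℝ) ^ 2 + (2 * |(0:ℝ)| + 1) ^ 2 / 3) * |Δ1|
      = |Δ1| / Real.sqrt 3 := by
  have habs : (0:ℝ) < |Δ1| := abs_pos.mpr hΔ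
  have h0 : (1 - |(0:ℝ)|) ^ 2 * Real.sqrt ((0:ℝ) ^ 2 + (2 * |(0:ℝ)| + 1) ^ 2 / 3)
      = Real.sqrt (1 / 3) := by
    norm_num
  have hstrict : ∀ κ : ℝ, -1 ≤ κ → κ ≤ 1 → κ ≠ 0 →
      (1 - |κ|) ^ 2 * Real.sqrt (κ ^ 2 + (2 * |κ| + 1) ^ 2 / 3) * |Δ1|
        < (1 - |(0:ℝ)|) ^ 2 * Real.sqrt ((0:ℝ) ^ 2 + (2 * |(0:ℝ)| + 1) ^ 2 / 3) * |Δ1| := by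
    intro κ h1 h2 hne
    rw [h0]
    apply mul_lt_mul_of_pos_right _ habs
    have hu : 0 < |κ| := abs_pos.mpr hne
    have hu1 : |κ| ≤ 1 := abs_le.mpr ⟨h1, h2⟩
    have := key_strict |κ| hu hu1
    rwa [sq_abs κ] at this
  refine ⟨?_, hstrict, ?_⟩
  · intro κ h1 h2
    rcases eq_or_ne κ 0 with rfl | hne
    · simp
    · exact (hstrict κ h1 h2 hne).le
  · rw [h0, one_div, Real.sqrt_inv]
    rw [inv_mul_eq_div]
end

section
/- For κ ∈ [0,1], define A(κ) = (1-κ)·[[1-3κ, κ²-κ],[6κ, -2κ²+κ+1]] and the diagonal matrix J = diag(1, 1/3). Then for Δ = (0, Δ¹)ᵀ, the quadratic form Δᵀ (I - A(κ))ᵀ J (I + A(κ)) Δ equals (κ²/3)(-7κ⁴ + 24κ³ - 27κ² + 8κ + 3)·(Δ¹)², which is at least (κ²/3)(Δ¹)² for all κ ∈ [0,1]. -/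
open Matrix

/-- With `A(κ) = (1-κ)·[[1-3κ, κ²-κ],[6κ, -2κ²+κ+1]]`, `J = diag(1,1/3)` and
`Δ = (0, Δ¹)ᵀ`, the quadratic form `Δᵀ(I - A(κ))ᵀ J (I + A(κ))Δ` equals
`(κ²/3)(-7κ⁴+24κ³-27κ²+8κ+3)(Δ¹)² ≥ (κ²/3)(Δ¹)²` for `κ ∈ [0,1]`. -/
theorem quadratic_form_identity (κ Δ1 : ℝ) (h0 : 0 ≤ κ) (h1 : κ ≤ 1) :
    (Matrix.vecMul ![0, Δ1]
        (((1 - (1 - κ) • !![1 - 3 * κ, κ ^ 2 - κ; 6 * κ, -2 * κ ^ 2 + κ + 1])ᵀ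
          * !![(1 : ℝ), 0; 0, 1 / 3]
          * (1 + (1 - κ) • !![1 - 3 * κ, κ ^ 2 - κ; 6 * κ, -2 * κ ^ 2 + κ + 1])))
        ⬝ᵥ ![0, Δ1]
      = κ ^ 2 / 3 * (-7 * κ ^ 4 + 24 * κ ^ 3 - 27 * κ ^ 2 + 8 * κ + 3) * Δ1 ^ 2) ∧
    κ ^ 2 / 3 * (-7 * κ ^ 4 + 24 * κ ^ 3 - 27 * κ ^ 2 + 8 * κ + 3) * Δ1 ^ 2
      ≥ κ ^ 2 / 3 * Δ1 ^ 2 := by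
  constructor
  · simp [Matrix.one_fin_two, Matrix.smul_of, Matrix.vecMul, dotProduct,
      Matrix.mul_apply, Fin.sum_univ_two, Matrix.transpose]
    ring
  · have h : -7 * κ ^ 4 + 24 * κ ^ 3 - 27 * κ ^ 2 + 8 * κ + 3 ≥ 1 := by nlinarith [mul_nonneg h0 (sub_nonneg.2 h1), sq_nonneg (κ - 1), sq_nonneg κ, sq_nonneg (κ*(κ-1)), mul_nonneg (mul_nonneg h0 h0) (sub_nonneg.2 h1), sq_nonneg (3*κ - 1), mul_nonneg (sub_nonneg.2 h1) (sq_nonneg (3*κ-1))]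
    nlinarith [sq_nonneg Δ1, sq_nonneg κ, mul_nonneg (sq_nonneg κ) (sq_nonneg Δ1)]
end
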